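/- If U is a nonprincipal ultrafilter over ω and T is a U-branching tree, then [T] (the set of infinite branches of T) is a perfect subset of ω^ω; consequently a Bernstein set in ω^ω is not U-determined. -/
import Mathlib

universe u

namespace UMeas

variable {A : Type u}

/-- The first `n` values of an infinite sequence, as a list. -/
def seg (s : ℕ → A) (n : ℕ) : List A := List.ofFn (fun i : Fin n => s i)

/-- `T` is a `U`-branching tree: a set of finite sequences closed under initial
segments, containing the empty sequence, whose branching sets are in `U`. -/
def IsUTree (U : Ultrafilter A) (T : Set (List A)) : Prop :=
  ([] ∈ T) ∧ (∀ σ ∈ T, ∀ τ : List A, τ <+: σ → τ ∈ T) ∧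
    ∀ σ ∈ T, {a : A | σ ++ [a] ∈ T} ∈ U

/-- The set of infinite branches through `T`. -/
def branches (T : Set (List A)) : Set (ℕ → A) := {s | ∀ n, seg s n ∈ T}

/-- Concatenation `σ⌢s` of a finite sequence with an infinite sequence. -/
def app (σ : List A) (s : ℕ → A) : ℕ → A :=
  fun n => if h : n < σ.length then σ.get ⟨n, h⟩ else s (n - σ.length)

/-- The section `X↾σ = {s | σ⌢s ∈ X}`. -/
def sect (X : Set (ℕ → A)) (σ : List A) : Set (ℕ → A) := {s | app σ s ∈ X}

def ULarge (U : Ultrafilter A) (X : Set (ℕ → A)) : Prop :=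
  ∃ T, IsUTree U T ∧ branches T ⊆ X

def USmall (U : Ultrafilter A) (X : Set (ℕ → A)) : Prop :=
  ∃ T, IsUTree U T ∧ branches T ∩ X = ∅

def UDetermined (U : Ultrafilter A) (X : Set (ℕ → A)) : Prop :=
  ULarge U X ∨ USmall U X

def UNull (U : Ultrafilter A) (X : Set (ℕ → A)) : Prop :=
  ∀ σ : List A, USmall U (sect X σ)

def UMeasurable (U : Ultrafilter A) (X : Set (ℕ → A)) : Prop :=
  ∀ σ : List A, UDetermined U (sect X σ)

end UMeas

open UMeas

section Aux

lemma seg_succ (s : ℕ → ℕ) (n : ℕ) : seg s (n + 1) = seg s n ++ [s n] := by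
  rw [seg, seg, List.ofFn_succ', List.concat_eq_append]
  rfl

lemma seg_length (s : ℕ → ℕ) (n : ℕ) : (seg s n).length = n := by
  simp [seg]

lemma seg_getD (s : ℕ → ℕ) {i n : ℕ} (h : i < n) : (seg s n).getD i 0 = s i := by
  rw [List.getD_eq_getElem _ _ (by simpa [seg_length] using h)]
  simp [seg]

/-- nonprincipality: every set in U meets the complement of any singleton -/
lemma exists_ne_of_mem (U : Ultrafilter ℕ) (hU : ∀ n : ℕ, U ≠ pure n)
    {S : Set ℕ} (hS : S ∈ U) (a : ℕ) : ∃ b ∈ S, b ≠ a := by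
  have h1 : ({a} : Set ℕ) ∉ U := by
    intro h
    obtain ⟨x, hx, hfx⟩ := Ultrafilter.eq_pure_of_finite_mem (Set.finite_singleton a) h
    exact hU a (by simpa [Set.mem_singleton_iff.mp hx] using hfx)
  have h2 : ({a} : Set ℕ)ᶜ ∈ U := (Ultrafilter.compl_mem_iff_notMem).mpr h1
  obtain ⟨b, hb⟩ := Ultrafilter.nonempty_of_mem (U.inter_mem hS h2)
  exact ⟨b, hb.1, hb.2⟩

/-- through every node of a U-tree there is a branch -/
lemma exists_branch (U : Ultrafilter ℕ) {T : Set (List ℕ)} (hT : IsUTree U T)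
    {σ : List ℕ} (hσ : σ ∈ T) : ∃ s ∈ branches T, seg s σ.length = σ := by
  obtain ⟨hnil, hdc, hbr⟩ := hT
  have hstep : ∀ τ ∈ T, ∃ a, τ ++ [a] ∈ T := fun τ hτ =>
    Ultrafilter.nonempty_of_mem (hbr τ hτ)
  classical
  let f : List ℕ → ℕ := fun τ => if h : τ ∈ T then (hstep τ h).choose else 0
  have hf : ∀ τ ∈ T, τ ++ [f τ] ∈ T := by
    intro τ hτ
    simp only [f, dif_pos hτ]
    exact (hstep τ hτ).choose_spec
  let g : ℕ → List ℕ := fun n => Nat.rec σ (fun _ l => l ++ [f l]) n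
  have hg0 : g 0 = σ := rfl
  have hgs : ∀ n, g (n + 1) = g n ++ [f (g n)] := fun n => rfl
  have hgT : ∀ n, g n ∈ T := by
    intro n; induction n with
    | zero => exact hσ
    | succ n ih => rw [hgs]; exact hf _ ih
  have hglen : ∀ n, (g n).length = σ.length + n := by
    intro n; induction n with
    | zero => simp [hg0]
    | succ n ih => rw [hgs]; simp [ih]; omega
  set s : ℕ → ℕ := fun n => (g (n + 1)).getD n 0 with hs
  have hpref : ∀ n, g n <+: g (n + 1) := by
    intro n; rw [hgs]; exact List.prefix_append _ _
  have hseg : ∀ n, seg s n = (g n).take n := by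
    intro n; induction n with
    | zero => simp [seg]
    | succ n ih =>
      rw [seg_succ, ih]
      have h1 : (g (n+1)).take n = (g n).take n := by
        rw [hgs]; exact List.take_append_of_le_length (by rw [hglen]; omega)
      have h2 : n < (g (n+1)).length := by have := hglen (n+1); omega
      rw [List.take_succ, ← h1]
      congr 1
      rw [List.getElem?_eq_getElem h2]
      simp [hs, List.getD_eq_getElem _ _ h2, List.getElem?_eq_getElem h2]
  have hsb : s ∈ branches T := by
    intro n
    rw [hseg]
    exact hdc _ (hgT n) _ (List.take_prefix _ _)
  refine ⟨s, hsb, ?_⟩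
  rw [hseg]
  have : σ <+: g σ.length := by
    induction σ.length with
    | zero => exact hg0 ▸ List.prefix_refl _
    | succ n ih => exact ih.trans (hpref n)
  obtain ⟨r, hr⟩ := this
  rw [← hr, List.take_append_of_le_length le_rfl, List.take_length]

/-- cylinder around seg s n is open -/
lemma cyl_open (s : ℕ → ℕ) (n : ℕ) : IsOpen {t : ℕ → ℕ | ∀ i < n, t i = s i} := by
  have : {t : ℕ → ℕ | ∀ i < n, t i = s i} = ⋂ i ∈ Set.Iio n, {t : ℕ → ℕ | t i = s i} := by
    ext t; simp [Set.mem_setOf_eq]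
  rw [this]
  refine Set.Finite.isOpen_biInter (Set.finite_Iio n) fun i _ => ?_
  have he : {t : ℕ → ℕ | t i = s i} = (fun t : ℕ → ℕ => t i) ⁻¹' {s i} := rfl
  rw [he]
  exact (isOpen_discrete _).preimage (continuous_apply i)

lemma seg_eq_of_agree {s t : ℕ → ℕ} {n : ℕ} (h : ∀ i < n, t i = s i) :
    seg t n = seg s n := by
  simp only [seg]
  congr 1
  ext i
  exact h i i.isLt

lemma agree_of_seg_eq {s t : ℕ → ℕ} {n : ℕ} (h : seg t n = seg s n) :
    ∀ i < n, t i = s i := by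
  intro i hi
  have h0 : (seg t n).getD i 0 = (seg s n).getD i 0 := by rw [h]
  rwa [seg_getD _ hi, seg_getD _ hi] at h0

/-- membership in a neighborhood gives a cylinder inside it -/
lemma cyl_basis {s : ℕ → ℕ} {V : Set (ℕ → ℕ)} (hV : V ∈ nhds s) :
    ∃ n, {t : ℕ → ℕ | ∀ i < n, t i = s i} ⊆ V := by
  rw [nhds_pi] at hV
  obtain ⟨I, hI, W, hW, hsub⟩ := Filter.mem_pi.mp hV
  obtain ⟨n, hn⟩ := hI.bddAbove
  refine ⟨n + 1, fun t ht => hsub fun i hi => ?_⟩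
  have : s i ∈ W i := by
    have := hW i
    simpa [nhds_discrete, Filter.mem_pure] using this
  have hi' : i < n + 1 := Nat.lt_succ_of_le (hn hi)
  rw [ht i hi']
  exact this

end Aux

theorem stmt9 (U : Ultrafilter ℕ) (hU : ∀ n : ℕ, U ≠ pure n) :
    (∀ T : Set (List ℕ), UMeas.IsUTree U T →
        Perfect (UMeas.branches T) ∧ (UMeas.branches T).Nonempty) ∧
    (∀ B : Set (ℕ → ℕ),
        (∀ P : Set (ℕ → ℕ), Perfect P → P.Nonempty → ¬ P ⊆ B ∧ ¬ P ⊆ Bᶜ) →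
        ¬ UMeas.UDetermined U B) := by
  have main : ∀ T : Set (List ℕ), UMeas.IsUTree U T →
      Perfect (UMeas.branches T) ∧ (UMeas.branches T).Nonempty := by
    intro T hT
    have hclosed : IsClosed (branches T) := by
      rw [← isOpen_compl_iff, isOpen_iff_mem_nhds]
      intro s hs
      simp only [Set.mem_compl_iff, branches, Set.mem_setOf_eq, not_forall] at hs
      obtain ⟨n, hn⟩ := hs
      rw [mem_nhds_iff]
      refine ⟨{t | ∀ i < n, t i = s i}, fun t ht hbt => ?_, cyl_open s n, fun i _ => rfl⟩
      exact hn (seg_eq_of_agree ht ▸ hbt n)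
    have hacc : Preperfect (branches T) := by
      intro s hsb
      rw [accPt_iff_nhds]
      intro V hV
      obtain ⟨n, hn⟩ := cyl_basis hV
      obtain ⟨a, ha, hane⟩ := exists_ne_of_mem U hU (hT.2.2 _ (hsb n)) (s n)
      have hσT : seg s n ++ [a] ∈ T := ha
      obtain ⟨t, htb, htseg⟩ := exists_branch U hT hσT
      have hlen : (seg s n ++ [a]).length = n + 1 := by simp [seg_length]
      rw [hlen] at htseg
      have hlen2 : (seg s n).length = n := seg_length s n
      have hagree' : ∀ i < n + 1, t i = (seg s n ++ [a]).getD i 0 := by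
        intro i hi
        have h0 : (seg t (n+1)).getD i 0 = (seg s n ++ [a]).getD i 0 := by rw [htseg]
        rwa [seg_getD _ hi] at h0
      have htn : t n = a := by
        have h0 := hagree' n (Nat.lt_succ_self n)
        rw [List.getD_eq_getElem _ _ (by simp [hlen2]),
          List.getElem_append_right (le_of_eq hlen2)] at h0
        simpa [hlen2] using h0
      have hti : ∀ i < n, t i = s i := by
        intro i hi
        have h0 := hagree' i (hi.trans (Nat.lt_succ_self n))
        rw [List.getD_eq_getElem _ _ (by simp [hlen2]; omega),
          List.getElem_append_left (by rw [hlen2]; exact hi)] at h0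
        rw [h0]
        simp [seg]
      refine ⟨t, ⟨hn hti, htb⟩, fun h => hane ?_⟩
      rw [← htn, h]
    have hne : (branches T).Nonempty := by
      obtain ⟨s, hs, _⟩ := exists_branch U hT hT.1
      exact ⟨s, hs⟩
    exact ⟨⟨hclosed, hacc⟩, hne⟩
  refine ⟨main, fun B hB hdet => ?_⟩
  rcases hdet with ⟨T, hT, hsub⟩ | ⟨T, hT, hdisj⟩
  · exact (hB _ (main T hT).1 (main T hT).2).1 hsub
  · refine (hB _ (main T hT).1 (main T hT).2).2 fun s hs hsB => ?_
    exact Set.eq_empty_iff_forall_notMem.mp hdisj s ⟨hs, hsB⟩
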